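/- Let h be a dual quaternion with h·conj(h) = 1 and h + conj(h) = 0, and let p be a nonzero pure quaternion (p + conj(p) = 0). Then for n₁ := i - h and s₁ := -ε(i - h)p (with i the complex imaginary unit in the complexified dual quaternions), one has s₁·conj(n₁) + n₁·conj(s₁) = 0. -/

import Mathlib

/-!
Conjugation reverses products and fixes the central `ε`, so with `s₁ = -ε n₁ p`,
`s₁ conj(n₁) + n₁ conj(s₁) = -ε n₁ (p + conj p) conj(n₁)`, which vanishes because `p` is pure.
-/

open Quaternion TrivSqZeroExt

/-- The complexified dual quaternions. -/
instance : IsScalarTower ℂ ℍ[ℂ] ℍ[ℂ] := ⟨fun s a b => Algebra.smul_mul_assoc s a b⟩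

instance : IsScalarTower ℂ ℍ[ℂ]ᵐᵒᵖ ℍ[ℂ] :=
  ⟨fun s r m => by
    change m * (s • r.unop) = s • (m * r.unop)
    exact Algebra.mul_smul_comm s m r.unop⟩

noncomputable abbrev DHC := DualNumber (Quaternion ℂ)

/-- Dual quaternion conjugation (fixing the complex scalar unit and `ε`). -/
noncomputable def dconj (q : DHC) : DHC := (star q.fst, star q.snd)

theorem fst_dconj (q : DHC) : (dconj q).fst = star q.fst := rfl

theorem snd_dconj (q : DHC) : (dconj q).snd = star q.snd := rfl

-- On `ℍ[ℂ]` the generic `star` lemmas are found neither by `simp` nor by `rw` without arguments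
-- (an instance mismatch), hence the explicit arguments.
theorem dconj_mul (x y : DHC) : dconj (x * y) = dconj y * dconj x := by
  ext : 1
  · exact star_mul x.fst y.fst
  · simp only [snd_dconj, snd_mul, fst_dconj, smul_eq_mul, op_smul_eq_mul]
    rw [star_add (x.fst * y.snd), star_mul x.fst, star_mul x.snd, add_comm]

theorem dconj_neg (x : DHC) : dconj (-x) = -dconj x := by
  ext : 1
  · exact star_neg x.fst
  · exact star_neg x.snd

theorem dconj_eps : dconj DualNumber.eps = DualNumber.eps := by
  ext : 1
  · exact star_zero _
  · exact star_one _

theorem dconj_inl (q : ℍ[ℂ]) : dconj (inl q) = inl (star q) := by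
  ext : 1
  · rfl
  · exact star_zero _

theorem central_sandwich_add {R : Type*} [Ring R] {e : R} (he : ∀ x, Commute e x)
    (n q q' m : R) :
    -(e * (n * q)) * m + n * -(q' * m * e) = -(e * (n * (q + q') * m)) := by
  have move_e : n * (q' * m * e) = e * (n * q' * m) := by
    rw [(he _).eq]
    noncomm_ring
  rw [mul_neg, move_e]
  noncomm_ring

theorem rp_null_line_general (h : DHC) (p : Quaternion ℂ) (hpure : p + star p = 0) :
    (-(DualNumber.eps * ((algebraMap ℂ DHC Complex.I - h) * inl p))) *
          dconj (algebraMap ℂ DHC Complex.I - h) +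
        (algebraMap ℂ DHC Complex.I - h) *
          dconj (-(DualNumber.eps * ((algebraMap ℂ DHC Complex.I - h) * inl p))) = 0 := by
  rw [dconj_neg, dconj_mul, dconj_mul, dconj_eps, dconj_inl,
    central_sandwich_add DualNumber.commute_eps_left, ← inl_add, hpure, inl_zero]
  simp only [mul_zero, zero_mul, neg_zero]

/-- For a half-turn `h` (`h conj h = 1`, `h + conj h = 0`) and a nonzero pure
quaternion `p`, the elements `n₁ = i - h` and `s₁ = -ε (i - h) p` satisfy
`s₁ conj n₁ + n₁ conj s₁ = 0`. -/
theorem rp_null_line (h : DHC) (hn : h * dconj h = 1) (hp : h + dconj h = 0)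
    (p : Quaternion ℂ) (hpure : p + star p = 0) (hp0 : p ≠ 0) :
    (-(DualNumber.eps * ((algebraMap ℂ DHC Complex.I - h) * inl p))) *
          dconj (algebraMap ℂ DHC Complex.I - h) +
        (algebraMap ℂ DHC Complex.I - h) *
          dconj (-(DualNumber.eps * ((algebraMap ℂ DHC Complex.I - h) * inl p))) = 0 :=
  rp_null_line_general h p hpure
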